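/- Let C be a Type I binary self-dual code of length 4n+2 with minimum distance d+2, where d ≡ 0 mod 4 and d ≠ 0, and whose shadow has minimum weight s ≥ 3. Then there exist two coordinates of C on which the subtraction of (11) yields a binary self-dual [4n, 2n] code C' of minimum distance d whose shadow has minimum weight s−1. -/

import Mathlib

open Finset

/-- Hamming weight of a binary vector. -/
def wt {n : ℕ} (v : Fin n → ZMod 2) : ℕ := (Finset.univ.filter (fun i => v i ≠ 0)).card

/-- Standard inner product over GF(2). -/
def inn {n : ℕ} (u v : Fin n → ZMod 2) : ZMod 2 := ∑ i, u i * v i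

/-- A code is self-dual if it equals its dual. -/
def IsSelfDual {n : ℕ} (C : Submodule (ZMod 2) (Fin n → ZMod 2)) : Prop :=
  ∀ v, v ∈ C ↔ ∀ c ∈ C, inn v c = 0

/-- `C` has minimum distance (weight) `d`. -/
def HasMinDist {n : ℕ} (C : Submodule (ZMod 2) (Fin n → ZMod 2)) (d : ℕ) : Prop :=
  (∃ c ∈ C, c ≠ 0 ∧ wt c = d) ∧ ∀ c ∈ C, c ≠ 0 → d ≤ wt c

/-- The shadow `S = C₀^⊥ \ C`, where `C₀` is the doubly-even subcode of `C`. -/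
def shadow {n : ℕ} (C : Submodule (ZMod 2) (Fin n → ZMod 2)) : Set (Fin n → ZMod 2) :=
  {v | ∀ c ∈ C, wt c % 4 = 0 → inn v c = 0} \ (C : Set (Fin n → ZMod 2))

/-- Covering radius of a code. -/
noncomputable def coveringRadius {n : ℕ} (C : Submodule (ZMod 2) (Fin n → ZMod 2)) : ℕ :=
  sInf {R | ∀ v : Fin n → ZMod 2, ∃ c ∈ C, wt (v - c) ≤ R}

/-- Prepend two coordinates to a vector. -/
def vcons2 {k : ℕ} (a b : ZMod 2) (v : Fin k → ZMod 2) : Fin (k + 2) → ZMod 2 :=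
  Fin.cons a (Fin.cons b v)

/-!
For a self-dual code `C`, a vector `y` lies in the shadow iff `⟨y, c⟩ ≡ wt c / 2 (mod 2)` for
every codeword `c` (given that some codeword has weight `≡ 2 (mod 4)`). Take a shadow vector `y₀`
of weight `s` and a codeword `c₀` of weight `d + 2 ≡ 2 (mod 4)`: then `⟨y₀, c₀⟩ = 1`, so the
overlap of `y₀` and `c₀` is odd while `wt c₀` is even, and there are coordinates `i, j` in the
support of `c₀` with `y₀ i ≠ y₀ j`.

The codewords with `c i = c j` form a hyperplane of `C` (if no codeword separated `i` and `j`,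
the weight-2 vector on `{i, j}` would lie in `C`), and deleting `i, j` is injective on it since
nonzero codewords have weight `≥ 3`. The image `C'` is self-orthogonal of dimension `2n`, hence
self-dual, and `c₀` drops to a word of weight `d`. A shadow vector `y` of `C` with `y i ≠ y j`
restricts to a shadow vector of `C'` of weight `wt y - 1`; conversely, a shadow vector of `C'`
extends to such a `y`, the two new values being fixed by the characterization tested on one
codeword separating `i` and `j`.
-/

lemma ZMod.two_eq_zero_or_eq_one (a : ZMod 2) : a = 0 ∨ a = 1 := by
  revert a; decide

lemma ZMod.add_eq_add_of_ne_of_ne {a b c d : ZMod 2} (h : a ≠ b) (h' : c ≠ d) : a + c = b + d := by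
  revert a b c d; decide

lemma ZMod.add_eq_one_of_ne {a b : ZMod 2} (h : a ≠ b) : a + b = 1 := by
  revert a b; decide

section BinaryVectors

variable {n : ℕ}

lemma inn_add_left (u v w : Fin n → ZMod 2) : inn (u + v) w = inn u w + inn v w :=
  add_dotProduct u v w

lemma inn_add_right (u v w : Fin n → ZMod 2) : inn u (v + w) = inn u v + inn u w :=
  dotProduct_add u v w

lemma wt_eq_zero_iff {v : Fin n → ZMod 2} : wt v = 0 ↔ v = 0 := hammingNorm_eq_zero

lemma wt_eq_sum_val (v : Fin n → ZMod 2) : wt v = ∑ m, (v m).val := by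
  rw [wt, card_filter]
  refine sum_congr rfl fun m _ => ?_
  generalize v m = a
  revert a; decide

lemma natCast_wt (v : Fin n → ZMod 2) : (wt v : ZMod 2) = ∑ m, v m := by
  simp only [wt_eq_sum_val, Nat.cast_sum, ZMod.natCast_zmod_val]

lemma inn_eq_wt_mul (u v : Fin n → ZMod 2) : inn u v = wt (u * v) := by
  rw [natCast_wt]; rfl

lemma inn_self (v : Fin n → ZMod 2) : inn v v = wt v := by
  rw [inn_eq_wt_mul]
  congr 2
  funext m
  change v m * v m = v m
  generalize v m = a
  revert a; decide

lemma wt_add_add_two_mul_wt_mul (u v : Fin n → ZMod 2) :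
    wt (u + v) + 2 * wt (u * v) = wt u + wt v := by
  simp only [wt_eq_sum_val, mul_sum, ← sum_add_distrib]
  refine sum_congr rfl fun m _ => ?_
  simp only [Pi.add_apply, Pi.mul_apply]
  generalize u m = a, v m = b
  revert a b; decide

lemma even_wt_iff_inn_self_eq_zero {v : Fin n → ZMod 2} : Even (wt v) ↔ inn v v = 0 := by
  rw [inn_self, ZMod.natCast_eq_zero_iff_even]

lemma exists_apply_ne_of_inn_eq_one {y c : Fin n → ZMod 2} (h : inn y c = 1)
    (hc : Even (wt c)) : ∃ i j, c i = 1 ∧ c j = 1 ∧ y i ≠ y j := by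
  by_contra! hconst
  obtain ⟨i, hi⟩ : ∃ i, c i ≠ 0 := by
    by_contra! hc0
    simp [inn, hc0] at h
  have hi : c i = 1 := (ZMod.two_eq_zero_or_eq_one _).resolve_left hi
  have : inn y c = y i * wt c := by
    rw [natCast_wt, mul_sum]
    refine sum_congr rfl fun m _ => ?_
    rcases ZMod.two_eq_zero_or_eq_one (c m) with hm | hm
    · simp [hm]
    · rw [hconst m i hm hi]
  rw [this, hc.natCast_zmod_two, mul_zero] at h
  exact zero_ne_one h

-- Only meaningful for even weights, as `/` rounds down.
def halfWt (v : Fin n → ZMod 2) : ZMod 2 := (wt v / 2 : ℕ)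

lemma halfWt_eq_zero_of_wt_mod_four {v : Fin n → ZMod 2} (h : wt v % 4 = 0) : halfWt v = 0 :=
  ZMod.natCast_eq_zero_iff_even.mpr (Nat.even_iff.mpr (by omega))

lemma halfWt_eq_one_of_wt_mod_four {v : Fin n → ZMod 2} (h : wt v % 4 = 2) : halfWt v = 1 :=
  ZMod.natCast_eq_one_iff_odd.mpr (Nat.odd_iff.mpr (by omega))

lemma wt_add_mod_four {u v : Fin n → ZMod 2} (h : inn u v = 0) :
    wt (u + v) % 4 = (wt u + wt v) % 4 := by
  have hsum := wt_add_add_two_mul_wt_mul u v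
  rw [inn_eq_wt_mul, ZMod.natCast_eq_zero_iff_even] at h
  obtain ⟨e, he⟩ := h
  omega

lemma halfWt_add {u v : Fin n → ZMod 2} (hu : Even (wt u)) (hv : Even (wt v)) (h : inn u v = 0) :
    halfWt (u + v) = halfWt u + halfWt v := by
  have hsum := wt_add_add_two_mul_wt_mul u v
  rw [inn_eq_wt_mul, ZMod.natCast_eq_zero_iff_even] at h
  obtain ⟨e, he⟩ := h
  have hhalf : wt (u + v) / 2 + 2 * e = wt u / 2 + wt v / 2 := by
    obtain ⟨a, ha⟩ := hu; obtain ⟨b, hb⟩ := hv; omega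
  have h2e : ((2 * e : ℕ) : ZMod 2) = 0 := (even_two_mul e).natCast_zmod_two
  rw [halfWt, halfWt, halfWt, ← Nat.cast_add, ← hhalf, Nat.cast_add, h2e, add_zero]

end BinaryVectors

section SelfDual

variable {n : ℕ} {C : Submodule (ZMod 2) (Fin n → ZMod 2)}

abbrev dotForm (n : ℕ) : LinearMap.BilinForm (ZMod 2) (Fin n → ZMod 2) :=
  dotProductBilin (ZMod 2) (ZMod 2)

lemma dotForm_nondegenerate : (dotForm n).Nondegenerate :=
  .ofSeparatingLeft fun x hx => funext fun m => by simpa using hx (Pi.single m 1)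

lemma mem_orthogonal_dotForm_iff {v : Fin n → ZMod 2} :
    v ∈ (dotForm n).orthogonal C ↔ ∀ c ∈ C, inn v c = 0 := by
  simp only [LinearMap.BilinForm.mem_orthogonal_iff, dotProductBilin_apply_apply]
  exact forall₂_congr fun c _ => by rw [dotProduct_comm]; rfl

lemma IsSelfDual.orthogonal_eq (hsd : IsSelfDual C) : (dotForm n).orthogonal C = C :=
  Submodule.ext fun v => mem_orthogonal_dotForm_iff.trans (hsd v).symm

lemma IsSelfDual.two_mul_finrank (hsd : IsSelfDual C) : 2 * Module.finrank (ZMod 2) C = n := by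
  have h := LinearMap.BilinForm.finrank_orthogonal dotForm_nondegenerate C
  rw [hsd.orthogonal_eq, Module.finrank_fin_fun] at h
  have := Submodule.finrank_le C
  rw [Module.finrank_fin_fun] at this
  omega

lemma isSelfDual_of_two_mul_finrank (horth : ∀ u ∈ C, ∀ v ∈ C, inn u v = 0)
    (hrank : 2 * Module.finrank (ZMod 2) C = n) : IsSelfDual C := by
  have hle : C ≤ (dotForm n).orthogonal C := fun u hu =>
    mem_orthogonal_dotForm_iff.mpr (horth u hu)
  have h := LinearMap.BilinForm.finrank_orthogonal dotForm_nondegenerate C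
  rw [Module.finrank_fin_fun] at h
  have heq := Submodule.eq_of_le_of_finrank_le hle (by omega)
  exact fun v => by rw [← mem_orthogonal_dotForm_iff, ← heq]

lemma IsSelfDual.inn_eq_zero (hsd : IsSelfDual C) {u v : Fin n → ZMod 2} (hu : u ∈ C)
    (hv : v ∈ C) : inn u v = 0 :=
  (hsd u).mp hu v hv

lemma IsSelfDual.even_wt (hsd : IsSelfDual C) {c : Fin n → ZMod 2} (hc : c ∈ C) : Even (wt c) :=
  even_wt_iff_inn_self_eq_zero.mpr (hsd.inn_eq_zero hc hc)

lemma IsSelfDual.exists_mem_apply_ne (hsd : IsSelfDual C) {i j : Fin n} (hij : i ≠ j)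
    (hC3 : ∀ c ∈ C, c ≠ 0 → 3 ≤ wt c) : ∃ w ∈ C, w i ≠ w j := by
  by_contra! hconst
  set χ : Fin n → ZMod 2 := Pi.single i 1 + Pi.single j 1
  have hχC : χ ∈ C := (hsd χ).mpr fun c hc => by
    change χ ⬝ᵥ c = 0
    simp only [χ, add_dotProduct, single_dotProduct, one_mul, hconst c hc]
    exact CharTwo.add_self_eq_zero (c j)
  have hχ0 : χ ≠ 0 := fun h => by simpa [χ, hij.symm] using congrFun h i
  have hχwt : wt χ ≤ 2 := by
    refine (card_le_card fun m hm => ?_).trans (card_le_two (a := i) (b := j))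
    by_contra hm'
    simp_all [χ, Pi.single_apply]
  have := hC3 χ hχC hχ0
  omega

lemma IsSelfDual.inn_eq_halfWt_of_mem_shadow (hsd : IsSelfDual C) {y c : Fin n → ZMod 2}
    (hy : y ∈ shadow C) (hc : c ∈ C) : inn y c = halfWt c := by
  obtain ⟨hyC₀, hyC⟩ := hy
  rcases (by have := Nat.even_iff.mp (hsd.even_wt hc); omega : wt c % 4 = 0 ∨ wt c % 4 = 2)
    with h4 | h4
  · rw [halfWt_eq_zero_of_wt_mod_four h4, hyC₀ c hc h4]
  · rw [halfWt_eq_one_of_wt_mod_four h4]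
    -- otherwise `y ⊥ C`, hence `y ∈ C`: if `wt c' ≡ 2 (mod 4)`, the word `c' + c` is doubly-even
    refine (ZMod.two_eq_zero_or_eq_one _).resolve_left fun hyc => hyC ((hsd y).mpr fun c' hc' => ?_)
    have := Nat.even_iff.mp (hsd.even_wt hc')
    rcases (by omega : wt c' % 4 = 0 ∨ wt c' % 4 = 2) with h4' | h4'
    · exact hyC₀ c' hc' h4'
    · have hsum : wt (c' + c) % 4 = 0 := by
        rw [wt_add_mod_four (hsd.inn_eq_zero hc' hc)]; omega
      simpa [inn_add_right, hyc] using hyC₀ _ (C.add_mem hc' hc) hsum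

lemma IsSelfDual.mem_shadow_of_inn_eq_halfWt (hsd : IsSelfDual C) (hT : ∃ c ∈ C, wt c % 4 = 2)
    {y : Fin n → ZMod 2} (hy : ∀ c ∈ C, inn y c = halfWt c) : y ∈ shadow C := by
  refine ⟨fun c hc h4 => (hy c hc).trans (halfWt_eq_zero_of_wt_mod_four h4), fun hyC => ?_⟩
  obtain ⟨c, hc, h2⟩ := hT
  have := (hy c hc).symm.trans (hsd.inn_eq_zero hyC hc)
  rw [halfWt_eq_one_of_wt_mod_four h2] at this
  exact one_ne_zero this

lemma IsSelfDual.add_mem_shadow (hsd : IsSelfDual C) {y c : Fin n → ZMod 2} (hy : y ∈ shadow C)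
    (hc : c ∈ C) : y + c ∈ shadow C := by
  refine ⟨fun c' hc' h4 => ?_, fun hyc => hy.2 ?_⟩
  · rw [inn_add_left, hy.1 c' hc' h4, hsd.inn_eq_zero hc hc', add_zero]
  · simpa using C.sub_mem hyc hc

end SelfDual

def pairSubcode {n : ℕ} (C : Submodule (ZMod 2) (Fin n → ZMod 2)) (i j : Fin n) :
    Submodule (ZMod 2) (Fin n → ZMod 2) :=
  C ⊓ LinearMap.ker ((LinearMap.proj i : (Fin n → ZMod 2) →ₗ[ZMod 2] ZMod 2) - LinearMap.proj j)

section PairSubcode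

variable {n : ℕ} {C : Submodule (ZMod 2) (Fin n → ZMod 2)} {i j : Fin n}

lemma mem_pairSubcode {c : Fin n → ZMod 2} : c ∈ pairSubcode C i j ↔ c ∈ C ∧ c i = c j := by
  simp [pairSubcode, sub_eq_zero]

lemma finrank_pairSubcode_add_one (hw : ∃ w ∈ C, w i ≠ w j) :
    Module.finrank (ZMod 2) (pairSubcode C i j) + 1 = Module.finrank (ZMod 2) C := by
  set L : Module.Dual (ZMod 2) C := LinearMap.domRestrict
    ((LinearMap.proj i : (Fin n → ZMod 2) →ₗ[ZMod 2] ZMod 2) - LinearMap.proj j) C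
  have hL : L ≠ 0 := by
    obtain ⟨w, hw, hwij⟩ := hw
    intro h
    simpa [L, sub_eq_zero, hwij] using LinearMap.congr_fun h ⟨w, hw⟩
  have := Module.Dual.finrank_ker_add_one_of_ne_zero hL
  rwa [LinearMap.ker_domRestrict, ← Submodule.finrank_map_subtype_eq,
    Submodule.map_comap_subtype] at this

end PairSubcode

/-- The subtraction of `(11)` on the coordinates `i, j`, with `f` enumerating the other
coordinates. -/
def subtraction {n k : ℕ} (C : Submodule (ZMod 2) (Fin n → ZMod 2)) (i j : Fin n)
    (f : Fin k → Fin n) : Submodule (ZMod 2) (Fin k → ZMod 2) :=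
  (pairSubcode C i j).map (LinearMap.funLeft (ZMod 2) (ZMod 2) f)

section Subtraction

variable {k : ℕ} {C : Submodule (ZMod 2) (Fin (k + 2) → ZMod 2)} {i j : Fin (k + 2)}
  {f : Fin k → Fin (k + 2)}

lemma mem_subtraction {x : Fin k → ZMod 2} :
    x ∈ subtraction C i j f ↔ ∃ c ∈ C, c i = c j ∧ x = c ∘ f := by
  simp only [subtraction, Submodule.mem_map, mem_pairSubcode, and_assoc, eq_comm (a := x)]
  rfl

structure OmitsPair (i j : Fin (k + 2)) (f : Fin k → Fin (k + 2)) : Prop where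
  ne : i ≠ j
  injective : Function.Injective f
  range_eq : Set.range f = ({i, j} : Set _)ᶜ

namespace OmitsPair

lemma sum_eq_add_add_sum_comp (hp : OmitsPair i j f) {M : Type*} [AddCommMonoid M]
    (g : Fin (k + 2) → M) :
    ∑ m, g m = g i + g j + ∑ t, g (f t) := by
  have hcompl : ({i, j} : Finset _)ᶜ = univ.map ⟨f, hp.injective⟩ := by
    ext m
    simpa [eq_comm] using (Set.ext_iff.mp hp.range_eq m).symm
  rw [← sum_add_sum_compl {i, j} g, sum_pair hp.ne, hcompl, sum_map]
  rfl

lemma wt_eq_add_add_wt_comp (hp : OmitsPair i j f) (c : Fin (k + 2) → ZMod 2) :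
    wt c = (c i).val + (c j).val + wt (c ∘ f) := by
  simp only [wt_eq_sum_val, hp.sum_eq_add_add_sum_comp (fun m => (c m).val)]
  rfl

lemma inn_eq_add_add_inn_comp (hp : OmitsPair i j f) (y c : Fin (k + 2) → ZMod 2) :
    inn y c = y i * c i + y j * c j + inn (y ∘ f) (c ∘ f) :=
  hp.sum_eq_add_add_sum_comp (fun m => y m * c m)

lemma wt_le_two_of_comp_eq_zero (hp : OmitsPair i j f) {c : Fin (k + 2) → ZMod 2}
    (h : c ∘ f = 0) : wt c ≤ 2 := by
  have hwt := hp.wt_eq_add_add_wt_comp c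
  rw [h, wt_eq_zero_iff.mpr rfl] at hwt
  have := ZMod.val_lt (c i)
  have := ZMod.val_lt (c j)
  omega

lemma wt_comp_add_one (hp : OmitsPair i j f) {y : Fin (k + 2) → ZMod 2} (h : y i ≠ y j) :
    wt (y ∘ f) + 1 = wt y := by
  have hval : (y i).val + (y j).val = 1 := by
    generalize y i = a, y j = b at h
    revert a b; decide
  rw [hp.wt_eq_add_add_wt_comp y, hval, add_comm]

lemma halfWt_eq_halfWt_comp_add (hp : OmitsPair i j f) {c : Fin (k + 2) → ZMod 2}
    (h : c i = c j) : halfWt c = halfWt (c ∘ f) + c j := by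
  have hwt := hp.wt_eq_add_add_wt_comp c
  rw [h] at hwt
  rcases ZMod.two_eq_zero_or_eq_one (c j) with h0 | h1
  · rw [h0, ZMod.val_zero] at hwt
    simp [halfWt, hwt, h0]
  · rw [h1] at hwt
    have : wt c / 2 = wt (c ∘ f) / 2 + 1 := by
      change wt c = 1 + 1 + wt (c ∘ f) at hwt
      omega
    simp [halfWt, this, h1]

lemma exists_comp_eq (hp : OmitsPair i j f) (x : Fin k → ZMod 2) (a b : ZMod 2) :
    ∃ y : Fin (k + 2) → ZMod 2, y ∘ f = x ∧ y i = a ∧ y j = b := by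
  have hi : i ∉ Set.range f := by simp [hp.range_eq]
  have hj : j ∉ Set.range f := by simp [hp.range_eq]
  refine ⟨Function.extend f x (fun m => if m = i then a else b),
    funext (hp.injective.extend_apply _ _), ?_, ?_⟩
  · rw [Function.extend_apply' _ _ _ hi, if_pos rfl]
  · rw [Function.extend_apply' _ _ _ hj, if_neg hp.ne.symm]

lemma inn_eq_zero_of_mem_subtraction (hp : OmitsPair i j f) (hsd : IsSelfDual C)
    {u v : Fin k → ZMod 2} (hu : u ∈ subtraction C i j f) (hv : v ∈ subtraction C i j f) :
    inn u v = 0 := by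
  obtain ⟨c, hc, hcij, rfl⟩ := mem_subtraction.mp hu
  obtain ⟨e, he, heij, rfl⟩ := mem_subtraction.mp hv
  have h := hp.inn_eq_add_add_inn_comp c e
  rw [hsd.inn_eq_zero hc he, hcij, heij, CharTwo.add_self_eq_zero, zero_add] at h
  exact h.symm

lemma finrank_subtraction (hp : OmitsPair i j f) (hC3 : ∀ c ∈ C, c ≠ 0 → 3 ≤ wt c) :
    Module.finrank (ZMod 2) (subtraction C i j f) =
      Module.finrank (ZMod 2) (pairSubcode C i j) := by
  rw [subtraction, ← LinearMap.range_domRestrict]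
  refine LinearMap.finrank_range_of_inj (LinearMap.ker_eq_bot.mp ?_)
  refine LinearMap.ker_eq_bot'.mpr fun ⟨c, hc⟩ hc0 => ?_
  have hcf : c ∘ f = 0 := hc0
  by_contra hne
  have := hC3 c (mem_pairSubcode.mp hc).1 fun h => hne (Subtype.ext h)
  have := hp.wt_le_two_of_comp_eq_zero hcf
  omega

lemma isSelfDual_subtraction (hp : OmitsPair i j f) (hsd : IsSelfDual C)
    (hC3 : ∀ c ∈ C, c ≠ 0 → 3 ≤ wt c) : IsSelfDual (subtraction C i j f) := by
  refine isSelfDual_of_two_mul_finrank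
    (fun u hu v hv => hp.inn_eq_zero_of_mem_subtraction hsd hu hv) ?_
  have := hsd.two_mul_finrank
  have := finrank_pairSubcode_add_one (hsd.exists_mem_apply_ne hp.ne hC3)
  rw [hp.finrank_subtraction hC3]
  omega

lemma hasMinDist_subtraction (hp : OmitsPair i j f) {d : ℕ} (hd : d ≠ 0)
    (hmin : ∀ c ∈ C, c ≠ 0 → d + 2 ≤ wt c) {c₀ : Fin (k + 2) → ZMod 2} (hc₀ : c₀ ∈ C)
    (hwt : wt c₀ = d + 2) (hi : c₀ i = 1) (hj : c₀ j = 1) :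
    HasMinDist (subtraction C i j f) d := by
  have hwt₀ : wt (c₀ ∘ f) = d := by
    have := hp.wt_eq_add_add_wt_comp c₀
    rw [hi, hj] at this
    change wt c₀ = 1 + 1 + wt (c₀ ∘ f) at this
    omega
  refine ⟨⟨c₀ ∘ f, mem_subtraction.mpr ⟨c₀, hc₀, hi.trans hj.symm, rfl⟩,
    fun h => hd (by rwa [h, wt_eq_zero_iff.mpr rfl, eq_comm] at hwt₀), hwt₀⟩, ?_⟩
  rintro _ hx hx0
  obtain ⟨c, hc, -, rfl⟩ := mem_subtraction.mp hx
  have := hmin c hc (by rintro rfl; exact hx0 rfl)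
  have := hp.wt_eq_add_add_wt_comp c
  have := ZMod.val_lt (c i)
  have := ZMod.val_lt (c j)
  omega

lemma comp_mem_shadow_subtraction (hp : OmitsPair i j f) (hsd : IsSelfDual C)
    (hS3 : ∀ y ∈ shadow C, 3 ≤ wt y) {y : Fin (k + 2) → ZMod 2} (hy : y ∈ shadow C)
    (hyij : y i ≠ y j) : y ∘ f ∈ shadow (subtraction C i j f) := by
  refine ⟨fun x hx hx4 => ?_, fun hx => ?_⟩
  · obtain ⟨c, hc, hcij, rfl⟩ := mem_subtraction.mp hx
    have hsplit := hp.inn_eq_add_add_inn_comp y c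
    have hhalf := hp.halfWt_eq_halfWt_comp_add hcij
    rw [halfWt_eq_zero_of_wt_mod_four hx4, ← hsd.inn_eq_halfWt_of_mem_shadow hy hc] at hhalf
    linear_combination hhalf - hsplit - y i * hcij - c j * ZMod.add_eq_one_of_ne hyij
  · -- `y + c` would be a shadow vector of weight at most 2
    obtain ⟨c, hc, -, hyc⟩ := mem_subtraction.mp hx
    have hzero : (y + c) ∘ f = 0 := funext fun t => by
      change y (f t) + c (f t) = 0
      rw [show y (f t) = c (f t) from congrFun hyc t, CharTwo.add_self_eq_zero]
    have := hp.wt_le_two_of_comp_eq_zero hzero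
    have := hS3 _ (hsd.add_mem_shadow hy hc)
    omega

lemma exists_mem_shadow_comp_eq (hp : OmitsPair i j f) (hsd : IsSelfDual C)
    (hC3 : ∀ c ∈ C, c ≠ 0 → 3 ≤ wt c) (hT : ∃ c ∈ C, wt c % 4 = 2) {x : Fin k → ZMod 2}
    (hx : x ∈ shadow (subtraction C i j f)) : ∃ y ∈ shadow C, y i ≠ y j ∧ y ∘ f = x := by
  have hsd' := hp.isSelfDual_subtraction hsd hC3
  obtain ⟨w, hw, hwij⟩ := hsd.exists_mem_apply_ne hp.ne hC3
  -- `y i` is forced by `inn y w = halfWt w`; the words with `c i = c j` pair right either way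
  set a := halfWt w + w j + inn x (w ∘ f)
  obtain ⟨y, hyf, hyi, hyj⟩ := hp.exists_comp_eq x a (a + 1)
  have hsplit (c : Fin (k + 2) → ZMod 2) : inn y c = a * (c i + c j) + c j + inn x (c ∘ f) := by
    rw [hp.inn_eq_add_add_inn_comp, hyf, hyi, hyj]
    ring
  have hpair : ∀ c ∈ C, c i = c j → inn y c = halfWt c := fun c hc hcij => by
    have hxc := hsd'.inn_eq_halfWt_of_mem_shadow hx (mem_subtraction.mpr ⟨c, hc, hcij, rfl⟩)
    rw [hsplit, hcij, CharTwo.add_self_eq_zero, mul_zero, zero_add, hxc,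
      hp.halfWt_eq_halfWt_comp_add hcij, add_comm]
  have hyw : inn y w = halfWt w := by
    rw [hsplit, ZMod.add_eq_one_of_ne hwij, mul_one]
    linear_combination (w j + inn x (w ∘ f)) * CharTwo.two_eq_zero (R := ZMod 2)
  have hall : ∀ c ∈ C, inn y c = halfWt c := fun c hc => by
    by_cases hcij : c i = c j
    · exact hpair c hc hcij
    · have h := hpair (c + w) (C.add_mem hc hw) (ZMod.add_eq_add_of_ne_of_ne hcij hwij)
      rwa [inn_add_right, hyw, halfWt_add (hsd.even_wt hc) (hsd.even_wt hw)
        (hsd.inn_eq_zero hc hw), add_left_inj] at h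
  exact ⟨y, hsd.mem_shadow_of_inn_eq_halfWt hT hall, by simp [hyi, hyj], hyf⟩

end OmitsPair

end Subtraction

theorem stmt_8 (n d s : ℕ) (hd4 : d % 4 = 0) (hd0 : d ≠ 0) (hs : 3 ≤ s)
    (C : Submodule (ZMod 2) (Fin (4*n+2) → ZMod 2))
    (hsd : IsSelfDual C) (hT : ∃ c ∈ C, wt c % 4 = 2)
    (hmin : HasMinDist C (d+2))
    (hsmin : (∃ y ∈ shadow C, wt y = s) ∧ ∀ y ∈ shadow C, s ≤ wt y) :
    ∃ i j : Fin (4*n+2), i ≠ j ∧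
      ∀ f : Fin (4*n) → Fin (4*n+2), Function.Injective f →
        Set.range f = ({i, j} : Set (Fin (4*n+2)))ᶜ →
        ∀ C' : Submodule (ZMod 2) (Fin (4*n) → ZMod 2),
          (C' : Set (Fin (4*n) → ZMod 2)) = {x | ∃ c ∈ C, c i = c j ∧ x = c ∘ f} →
          IsSelfDual C' ∧ Module.finrank (ZMod 2) ↥C' = 2*n ∧ HasMinDist C' d ∧
          (∃ y ∈ shadow C', wt y = s - 1) ∧ ∀ y ∈ shadow C', s - 1 ≤ wt y := by
  obtain ⟨⟨y₀, hy₀, hy₀wt⟩, hSmin⟩ := hsmin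
  obtain ⟨⟨c₀, hc₀, -, hc₀wt⟩, hCmin⟩ := hmin
  have hC3 : ∀ c ∈ C, c ≠ 0 → 3 ≤ wt c := fun c hc hc0 => by
    have := hCmin c hc hc0
    omega
  have hS3 : ∀ y ∈ shadow C, 3 ≤ wt y := fun y hy => hs.trans (hSmin y hy)
  have hy₀c₀ : inn y₀ c₀ = 1 := by
    rw [hsd.inn_eq_halfWt_of_mem_shadow hy₀ hc₀, halfWt_eq_one_of_wt_mod_four (by omega)]
  obtain ⟨i, j, hc₀i, hc₀j, hy₀ij⟩ := exists_apply_ne_of_inn_eq_one hy₀c₀ (hsd.even_wt hc₀)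
  have hij : i ≠ j := fun h => hy₀ij (congrArg y₀ h)
  refine ⟨i, j, hij, fun f hf hr C' hC' => ?_⟩
  have hp : OmitsPair i j f := ⟨hij, hf, hr⟩
  obtain rfl : C' = subtraction C i j f :=
    SetLike.coe_injective (hC'.trans (Set.ext fun x => mem_subtraction.symm))
  have hrank := hsd.two_mul_finrank
  have hpair := finrank_pairSubcode_add_one (hsd.exists_mem_apply_ne hij hC3)
  refine ⟨hp.isSelfDual_subtraction hsd hC3, by rw [hp.finrank_subtraction hC3]; omega,
    hp.hasMinDist_subtraction hd0 hCmin hc₀ hc₀wt hc₀i hc₀j,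
    ⟨y₀ ∘ f, hp.comp_mem_shadow_subtraction hsd hS3 hy₀ hy₀ij, ?_⟩, fun x hx => ?_⟩
  · have := hp.wt_comp_add_one hy₀ij
    omega
  · obtain ⟨y, hy, hyij, rfl⟩ := hp.exists_mem_shadow_comp_eq hsd hC3 hT hx
    have := hp.wt_comp_add_one hyij
    have := hSmin y hy
    omega
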